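/- arXiv:1507.05950 — 2 statements merged into one kernel-verified Lean document; each statement's English description precedes it below -/
import Mathlib

section
/- Let A be an n×n real symmetric PSD matrix whose top eigenvalue is λ₁ with unit eigenvector v₁. Let x̂ be the vector obtained by keeping the k largest-in-absolute-value entries of v₁ and zeroing the rest, and let x = x̂/‖x̂‖₂. Then x^T A x ≥ (k/n) λ₁. -/
/-!
Write `s = ∑_{i ∈ S} vᵢ²` for the mass of `v` on its `k` largest entries. Since the average of
`vᵢ²` over `S` is at least its average over all indices, `s ≥ k/n`. On the other hand, the
normalized truncation `x` satisfies `⟨x, v⟩ = s / √s = √s`, and the Cauchy–Schwarz inequality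
for the form `⟨·, A ·⟩`, tested against the eigenvector `v`, gives
`xᵀ A x ≥ λ₁ ⟨x, v⟩² = λ₁ s ≥ (k/n) λ₁`.
-/

open Matrix Finset

theorem Finset.card_nsmul_sum_le_card_nsmul_sum_of_forall_le {ι M : Type*} [Fintype ι]
    [DecidableEq ι] [AddCommMonoid M] [PartialOrder M] [IsOrderedAddMonoid M] (f : ι → M)
    (S : Finset ι) (h : ∀ i ∈ S, ∀ j ∉ S, f j ≤ f i) :
    #S • ∑ i, f i ≤ Fintype.card ι • ∑ i ∈ S, f i := by
  have hcross : #S • ∑ j ∈ Sᶜ, f j ≤ #Sᶜ • ∑ i ∈ S, f i :=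
    calc #S • ∑ j ∈ Sᶜ, f j = ∑ _i ∈ S, ∑ j ∈ Sᶜ, f j := (sum_const _).symm
      _ ≤ ∑ i ∈ S, ∑ _j ∈ Sᶜ, f i :=
        sum_le_sum fun i hi => sum_le_sum fun j hj => h i hi j (mem_compl.mp hj)
      _ = #Sᶜ • ∑ i ∈ S, f i := by simp only [sum_const, smul_sum]
  calc #S • ∑ i, f i = #S • ∑ i ∈ S, f i + #S • ∑ j ∈ Sᶜ, f j := by
        rw [← sum_add_sum_compl S f, smul_add]
    _ ≤ #S • ∑ i ∈ S, f i + #Sᶜ • ∑ i ∈ S, f i := add_le_add_right hcross _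
    _ = Fintype.card ι • ∑ i ∈ S, f i := by rw [← add_smul, card_add_card_compl]

theorem Matrix.dotProduct_ite_mem {ι R : Type*} [Fintype ι] [DecidableEq ι]
    [NonUnitalNonAssocSemiring R] (S : Finset ι) (v w : ι → R) :
    (fun i => if i ∈ S then v i else 0) ⬝ᵥ w = ∑ i ∈ S, v i * w i := by
  simp only [dotProduct, ite_mul, zero_mul, sum_ite_mem, univ_inter]

theorem Matrix.PosSemidef.mul_sq_dotProduct_le {ι : Type*} [Fintype ι] {A : Matrix ι ι ℝ}
    (hA : A.PosSemidef) {lam : ℝ} {v : ι → ℝ} (heig : A *ᵥ v = lam • v) (hv : v ⬝ᵥ v = 1)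
    (y : ι → ℝ) : lam * (y ⬝ᵥ v) ^ 2 ≤ y ⬝ᵥ A *ᵥ y := by
  set t := y ⬝ᵥ v
  have hvA : v ⬝ᵥ A *ᵥ y = lam * t := by
    rw [dotProduct_mulVec, ← mulVec_transpose, (isHermitian_iff_isSymm.mp hA.1).eq, heig,
      smul_dotProduct, smul_eq_mul, dotProduct_comm]
  have hnonneg := hA.dotProduct_mulVec_nonneg (y - t • v)
  simp only [star_trivial, mulVec_sub, mulVec_smul, heig, dotProduct_sub, sub_dotProduct,
    smul_dotProduct, dotProduct_smul, smul_eq_mul, hvA, hv] at hnonneg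
  linarith

theorem stmt_2_general {n : ℕ} (A : Matrix (Fin n) (Fin n) ℝ) (hA : A.PosSemidef)
    (lam : ℝ) (v : Fin n → ℝ)
    (heig : A.mulVec v = lam • v)
    (hv_unit : v ⬝ᵥ v = 1)
    (k : ℕ)
    (S : Finset (Fin n)) (hS : S.card = k)
    (htop : ∀ i ∈ S, ∀ j ∉ S, |v j| ≤ |v i|) :
    let xhat : Fin n → ℝ := fun i => if i ∈ S then v i else 0
    let x : Fin n → ℝ := (Real.sqrt (xhat ⬝ᵥ xhat))⁻¹ • xhat
    ((k : ℝ) / n) * lam ≤ x ⬝ᵥ A.mulVec x := by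
  intro xhat x
  set s := ∑ i ∈ S, v i * v i
  have hxhat_v : xhat ⬝ᵥ v = s := dotProduct_ite_mem S v v
  have hxhat_xhat : xhat ⬝ᵥ xhat = s := by
    rw [dotProduct_ite_mem]
    exact sum_congr rfl fun i hi => by simp only [xhat, if_pos hi]
  have hs_nonneg : 0 ≤ s := sum_nonneg fun i _ => mul_self_nonneg (v i)
  have hmass : (k : ℝ) / n ≤ s := by
    have := card_nsmul_sum_le_card_nsmul_sum_of_forall_le (fun i => v i * v i) S
      fun i hi j hj => by simpa only [← sq, sq_le_sq] using htop i hi j hj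
    rw [show ∑ i, v i * v i = 1 from hv_unit, nsmul_eq_mul, nsmul_eq_mul, Fintype.card_fin, hS,
      mul_one] at this
    exact div_le_of_le_mul₀ (Nat.cast_nonneg n) hs_nonneg (by rwa [mul_comm])
  have hx_v : (x ⬝ᵥ v) ^ 2 = s := by
    simp only [x, smul_dotProduct, hxhat_v, hxhat_xhat, smul_eq_mul, ← div_eq_inv_mul,
      Real.div_sqrt, Real.sq_sqrt hs_nonneg]
  have hlam : 0 ≤ lam := by
    simpa [heig, hv_unit] using hA.dotProduct_mulVec_nonneg v
  calc (k : ℝ) / n * lam ≤ lam * (x ⬝ᵥ v) ^ 2 := by rw [hx_v, mul_comm]; gcongr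
    _ ≤ x ⬝ᵥ A *ᵥ x := hA.mul_sq_dotProduct_le heig hv_unit x

/-- Truncating the top unit eigenvector of a PSD matrix to its `k`
largest-in-absolute-value entries and renormalizing yields a vector whose
quadratic form is at least `(k/n) λ₁`. -/
theorem stmt_2 {n : ℕ} (A : Matrix (Fin n) (Fin n) ℝ) (hA : A.PosSemidef)
    (lam : ℝ) (v : Fin n → ℝ)
    (heig : A.mulVec v = lam • v)
    (hv_unit : v ⬝ᵥ v = 1)
    (hmax : ∀ u : Fin n → ℝ, u ⬝ᵥ u = 1 → u ⬝ᵥ A.mulVec u ≤ lam)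
    (k : ℕ) (hk : 1 ≤ k) (hkn : k ≤ n)
    (S : Finset (Fin n)) (hS : S.card = k)
    (htop : ∀ i ∈ S, ∀ j ∉ S, |v j| ≤ |v i|) :
    let xhat : Fin n → ℝ := fun i => if i ∈ S then v i else 0
    let x : Fin n → ℝ := (Real.sqrt (xhat ⬝ᵥ xhat))⁻¹ • xhat
    ((k : ℝ) / n) * lam ≤ x ⬝ᵥ A.mulVec x :=
  stmt_2_general A hA lam v heig hv_unit k S hS htop
end

section
/- For nonnegative reals V₁, V₂ and OPT satisfying V₁ ≥ OPT/√k and V₂ ≥ (k/n)·OPT with 1 ≤ k ≤ n, one has max{V₁, V₂} ≥ OPT/n^{1/3}. -/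
/-!
Cubing both sides, it suffices that `max{V₁,V₂}³ ≥ V₁²·V₂ ≥ (OPT²/k)·(k·OPT/n) = OPT³/n`;
this is the integral form of `max{V₁,V₂} ≥ V₁^{2/3} V₂^{1/3}`, and `k` cancels.
-/

theorem pow_mul_pow_le_max_pow {α : Type*} [Semiring α] [LinearOrder α] [IsOrderedRing α]
    {a b x y : α} (hx : 0 ≤ x) (hy : 0 ≤ y) (hxa : x ≤ a) (hyb : y ≤ b) (m l : ℕ) :
    x ^ m * y ^ l ≤ max a b ^ (m + l) := by
  have hmax : 0 ≤ max a b := hy.trans (hyb.trans (le_max_right a b))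
  rw [pow_add]
  exact mul_le_mul (pow_le_pow_left₀ hx (hxa.trans (le_max_left a b)) m)
    (pow_le_pow_left₀ hy (hyb.trans (le_max_right a b)) l) (pow_nonneg hy l) (pow_nonneg hmax m)

theorem stmt_4_general (V₁ V₂ OPT : ℝ) (hOPT : 0 ≤ OPT)
    (k n : ℕ) (hk : 1 ≤ k)
    (h1 : OPT / Real.sqrt k ≤ V₁)
    (h2 : ((k : ℝ) / n) * OPT ≤ V₂) :
    OPT / (n : ℝ) ^ ((1 : ℝ) / 3) ≤ max V₁ V₂ := by
  have hk0 : (k : ℝ) ≠ 0 := by positivity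
  have hx : 0 ≤ OPT / Real.sqrt k := by positivity
  have hy : 0 ≤ (k : ℝ) / n * OPT := by positivity
  have hcube : ((n : ℝ) ^ ((1 : ℝ) / 3)) ^ 3 = n := by
    simpa using Real.rpow_inv_natCast_pow (n := 3) n.cast_nonneg three_ne_zero
  refine le_of_pow_le_pow_left₀ three_ne_zero (hy.trans (h2.trans (le_max_right _ _))) ?_
  calc (OPT / (n : ℝ) ^ ((1 : ℝ) / 3)) ^ 3 = OPT ^ 3 / n := by rw [div_pow, hcube]
    _ = (OPT / Real.sqrt k) ^ 2 * ((k : ℝ) / n * OPT) ^ 1 := by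
        rw [div_pow, Real.sq_sqrt (Nat.cast_nonneg k)]
        field_simp
    _ ≤ max V₁ V₂ ^ (2 + 1) := pow_mul_pow_le_max_pow hx hy h1 h2 2 1

/-- Combining the two algorithmic guarantees `V₁ ≥ OPT/√k` and
`V₂ ≥ (k/n)·OPT` yields `max{V₁,V₂} ≥ OPT / n^{1/3}`. -/
theorem stmt_4 (V₁ V₂ OPT : ℝ) (hV₁0 : 0 ≤ V₁) (hV₂0 : 0 ≤ V₂) (hOPT : 0 ≤ OPT)
    (k n : ℕ) (hk : 1 ≤ k) (hkn : k ≤ n)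
    (h1 : OPT / Real.sqrt k ≤ V₁)
    (h2 : ((k : ℝ) / n) * OPT ≤ V₂) :
    OPT / (n : ℝ) ^ ((1 : ℝ) / 3) ≤ max V₁ V₂ :=
  stmt_4_general V₁ V₂ OPT hOPT k n hk h1 h2
end
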